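/- arXiv:2411.06301 — 4 statements merged into one kernel-verified Lean document; each statement's English description precedes it below -/
import Mathlib

section
/- Let f : (0,∞) → (0,∞] be the probability generating function of a nonnegative integer random variable X with E[X] < 1 and P[X ≥ 2] > 0, and suppose f is continuous (with (0,∞] given the half-open interval topology). Then there exists a unique q > 1 with f(q) = q. -/
/-!
For `s ≥ 1` the generating function factors as `f s = 1 + (s - 1) φ(s)` with
`φ(s) = ∑ₘ pₘ (1 + s + ⋯ + s^(m-1))`, so the fixed points `q > 1` of `f` are the
solutions of `φ(q) = 1`. A positive `pₘ` with `m ≥ 2` makes `φ` strictly increasing where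
it is finite and forces `φ(s) ≥ pₘ s → ∞`, while `φ(1) = E[X] < 1`. Continuity of `f` at
`1` makes `φ` finite a little to the right of `1`, where dominated convergence makes `φ`
continuous, so `φ(a) < 1` for some `a > 1`. On `(1, ∞)` the quotient `φ = (f - 1)/(s - 1)`
is continuous, and the intermediate value theorem produces the fixed point.
-/

open ENNReal Filter Topology Set MeasureTheory

theorem ENNReal.continuousOn_tsum_of_le {α β : Type*} [TopologicalSpace α]
    [FirstCountableTopology α] {F : β → α → ℝ≥0∞} {s : Set α}
    (hF : ∀ i, ContinuousOn (F i) s) {bound : β → ℝ≥0∞}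
    (h_le : ∀ i, ∀ x ∈ s, F i x ≤ bound i) (h_fin : ∑' i, bound i ≠ ∞) :
    ContinuousOn (fun x => ∑' i, F i x) s := by
  let _ : MeasurableSpace β := ⊤
  intro x hx
  simp only [ContinuousWithinAt, ← lintegral_count]
  refine tendsto_lintegral_filter_of_dominated_convergence bound
    (.of_forall fun _ => .of_discrete) ?_ (by rwa [lintegral_count])
    (.of_forall fun i => hF i x hx)
  filter_upwards [self_mem_nhdsWithin] with y hy
  exact .of_forall fun i => h_le i y hy

section pgfSlope

variable (p : ℕ → ℝ≥0∞)

noncomputable def pgfSlope (s : ℝ≥0∞) : ℝ≥0∞ :=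
  ∑' m, p m * ∑ k ∈ Finset.range m, s ^ k

variable {p}

theorem tsum_mul_pow_eq_sub_one_mul_pgfSlope_add {s : ℝ≥0∞} (hs : 1 ≤ s) :
    ∑' m, p m * s ^ m = (s - 1) * pgfSlope p s + ∑' m, p m := by
  have hs' : s - 1 + 1 = s := tsub_add_cancel_of_le hs
  have h (m : ℕ) : p m * s ^ m = (s - 1) * (p m * ∑ k ∈ Finset.range m, s ^ k) + p m := by
    rw [← hs', ← geom_sum_mul_add (s - 1) m, hs']
    ring
  simp only [h, ENNReal.tsum_add, ENNReal.tsum_mul_left, pgfSlope]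

theorem pgfSlope_one : pgfSlope p 1 = ∑' m : ℕ, (m : ℝ≥0∞) * p m := by
  simp [pgfSlope, mul_comm]

theorem pgfSlope_mono : Monotone (pgfSlope p) := fun _ _ h =>
  ENNReal.tsum_le_tsum fun _ =>
    mul_le_mul_right (Finset.sum_le_sum fun k _ => pow_le_pow_left' h k) _

theorem mul_le_pgfSlope {m : ℕ} (hm : 2 ≤ m) (s : ℝ≥0∞) : p m * s ≤ pgfSlope p s :=
  calc p m * s = p m * s ^ 1 := by rw [pow_one]
    _ ≤ p m * ∑ k ∈ Finset.range m, s ^ k :=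
      mul_le_mul_right (Finset.single_le_sum (fun _ _ => zero_le) (Finset.mem_range.2 hm)) _
    _ ≤ pgfSlope p s := ENNReal.le_tsum m

theorem pgfSlope_strictMonoOn {m : ℕ} (hm : 2 ≤ m) (hpm : p m ≠ 0) (hpm' : p m ≠ ∞) :
    StrictMonoOn (pgfSlope p) {s | pgfSlope p s ≠ ∞} := by
  intro x hx y _ hxy
  have hx_sum : ∑ k ∈ Finset.range m, x ^ k ≠ ∞ := fun h =>
    hx (top_le_iff.mp ((ENNReal.mul_top hpm).symm.trans_le (h ▸ ENNReal.le_tsum m)))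
  refine ENNReal.tsum_lt_tsum (i := m) hx
    (fun _ => mul_le_mul_right (Finset.sum_le_sum fun k _ => pow_le_pow_left' hxy.le k) _)
    (ENNReal.mul_lt_mul_right hpm hpm' ?_)
  -- the term `k = 1` grows strictly, the others weakly
  have h1 : 1 ∈ Finset.range m := Finset.mem_range.2 hm
  rw [← Finset.add_sum_erase _ _ h1, ← Finset.add_sum_erase _ _ h1]
  refine ENNReal.add_lt_add_of_lt_of_le ?_ (by simpa using hxy) ?_
  · exact ne_top_of_le_ne_top hx_sum
      (Finset.sum_le_sum_of_subset (Finset.erase_subset _ _))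
  · exact Finset.sum_le_sum fun k _ => pow_le_pow_left' hxy.le k

theorem continuousOn_pgfSlope_Iic (hp : ∀ m, p m ≠ ∞) {b : ℝ≥0∞} (hb : pgfSlope p b ≠ ∞) :
    ContinuousOn (pgfSlope p) (Iic b) :=
  ENNReal.continuousOn_tsum_of_le
    (fun m => ((ENNReal.continuous_const_mul (hp m)).comp
      (continuous_finsetSum _ fun k _ => ENNReal.continuous_pow k)).continuousOn)
    (fun _ _ hx => mul_le_mul_right (Finset.sum_le_sum fun k _ => pow_le_pow_left' hx k) _)
    hb

theorem tsum_mul_pow_eq_self_iff (hprob : ∑' m, p m = 1) {q : ℝ≥0∞} (hq1 : 1 < q) (hq : q ≠ ∞) :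
    ∑' m, p m * q ^ m = q ↔ pgfSlope p q = 1 := by
  have hq_eq : q = (q - 1) * 1 + 1 := by rw [mul_one, tsub_add_cancel_of_le hq1.le]
  rw [tsum_mul_pow_eq_sub_one_mul_pgfSlope_add hq1.le, hprob]
  conv_lhs => rhs; rw [hq_eq]
  rw [ENNReal.add_left_inj one_ne_top,
    ENNReal.mul_right_inj (tsub_pos_of_lt hq1).ne' (sub_ne_top hq)]

theorem exists_one_lt_pgfSlope_ne_top (hp1 : ∑' m, p m ≠ ∞)
    (h : ContinuousWithinAt (fun s => ∑' m, p m * s ^ m) (Ioo 1 ∞) 1) :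
    ∃ b, 1 < b ∧ pgfSlope p b ≠ ∞ := by
  have := left_nhdsWithin_Ioo_neBot one_lt_top
  simp only [ContinuousWithinAt, one_pow, mul_one] at h
  obtain ⟨b, hb_fin, hb⟩ :=
    ((h.eventually_lt_const hp1.lt_top).and self_mem_nhdsWithin).exists
  refine ⟨b, hb.1, fun hb_top => hb_fin.ne ?_⟩
  rw [tsum_mul_pow_eq_sub_one_mul_pgfSlope_add hb.1.le, hb_top,
    ENNReal.mul_top (tsub_pos_of_lt hb.1).ne', top_add]

theorem exists_pgfSlope_lt_one (hp : ∀ m, p m ≠ ∞) {b : ℝ≥0∞} (hb1 : 1 < b)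
    (hb : pgfSlope p b ≠ ∞) (hmean : ∑' m : ℕ, (m : ℝ≥0∞) * p m < 1) :
    ∃ a, 1 < a ∧ a < b ∧ pgfSlope p a < 1 := by
  have := left_nhdsWithin_Ioo_neBot hb1
  have h := ((continuousOn_pgfSlope_Iic hp hb 1 hb1.le).mono
    (Ioo_subset_Ioc_self.trans Ioc_subset_Iic_self : Ioo 1 b ⊆ _)).tendsto
  rw [pgfSlope_one] at h
  obtain ⟨a, ha_lt, ha⟩ := ((h.eventually_lt_const hmean).and self_mem_nhdsWithin).exists
  exact ⟨a, ha.1, ha.2, ha_lt⟩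

theorem continuousOn_pgfSlope_Ioo (hp1 : ∑' m, p m ≠ ∞)
    (h : ContinuousOn (fun s => ∑' m, p m * s ^ m) (Ioo 1 ∞)) :
    ContinuousOn (pgfSlope p) (Ioo 1 ∞) := by
  have h_eq : EqOn (fun s => (∑' m, p m * s ^ m - ∑' m, p m) * (s - 1)⁻¹) (pgfSlope p)
      (Ioo 1 ∞) := by
    intro s hs
    dsimp only
    rw [tsum_mul_pow_eq_sub_one_mul_pgfSlope_add hs.1.le, ENNReal.add_sub_cancel_right hp1,
      mul_comm, ← mul_assoc,
      ENNReal.inv_mul_cancel (tsub_pos_of_lt hs.1).ne' (sub_ne_top hs.2.ne), one_mul]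
  refine ContinuousOn.congr ?_ h_eq.symm
  refine ((ENNReal.continuous_sub_right _).comp_continuousOn h).ennreal_mul
    (ENNReal.continuous_sub_right 1).inv.continuousOn (fun s hs => .inr ?_) (fun s hs => .inl ?_)
  · exact ENNReal.inv_ne_top.2 (tsub_pos_of_lt hs.1).ne'
  · exact ENNReal.inv_ne_zero.2 (sub_ne_top hs.2.ne)

end pgfSlope

/-- Let `f` be the probability generating function of an `ℕ`-valued
random variable with distribution `p`, mean `< 1` and `P[X ≥ 2] > 0`, and suppose `f`
is continuous on `(0,∞)` (with values in `(0,∞]`, which carries the subspace topology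
of `ℝ≥0∞`). Then there is a unique `q > 1` (in `(0,∞)`) with `f q = q`. -/
theorem exists_unique_fixed_point_single_type
    (p : ℕ → ℝ≥0∞) (f : ℝ≥0∞ → ℝ≥0∞)
    (hf : ∀ s, f s = ∑' m, p m * s ^ m)
    (hprob : ∑' m, p m = 1)
    (hmean : ∑' m : ℕ, (m : ℝ≥0∞) * p m < 1)
    (h2 : ∃ m, 2 ≤ m ∧ 0 < p m)
    (hcont : ContinuousOn f {s : ℝ≥0∞ | 0 < s ∧ s ≠ ⊤}) :
    ∃! q : ℝ≥0∞, 1 < q ∧ q ≠ ⊤ ∧ f q = q := by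
  obtain ⟨m, hm, hpm⟩ := h2
  obtain rfl : f = fun s => ∑' m, p m * s ^ m := funext hf
  have hp (n : ℕ) : p n ≠ ∞ := ne_top_of_le_ne_top one_ne_top (hprob ▸ ENNReal.le_tsum n)
  have hp1 : ∑' n, p n ≠ ∞ := hprob ▸ one_ne_top
  have hsub : Ioo 1 ∞ ⊆ {s : ℝ≥0∞ | 0 < s ∧ s ≠ ⊤} := fun s hs =>
    ⟨zero_lt_one.trans hs.1, hs.2.ne⟩
  obtain ⟨b, hb1, hb⟩ :=
    exists_one_lt_pgfSlope_ne_top hp1 ((hcont 1 ⟨one_pos, one_ne_top⟩).mono hsub)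
  obtain ⟨a, ha1, hab, ha⟩ := exists_pgfSlope_lt_one hp hb1 hb hmean
  set c := max a (p m)⁻¹
  have hc : 1 ≤ pgfSlope p c :=
    calc 1 = p m * (p m)⁻¹ := (ENNReal.mul_inv_cancel hpm.ne' (hp m)).symm
      _ ≤ p m * c := mul_le_mul_right (le_max_right _ _) _
      _ ≤ pgfSlope p c := mul_le_pgfSlope hm c
  have hc_top : c < ∞ := max_lt (hab.trans_le le_top) (ENNReal.inv_lt_top.2 hpm)
  obtain ⟨q, hq, hq_one⟩ := intermediate_value_Icc (le_max_left a _)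
    ((continuousOn_pgfSlope_Ioo hp1 (hcont.mono hsub)).mono
      fun s hs => ⟨ha1.trans_le hs.1, hs.2.trans_lt hc_top⟩) ⟨ha.le, hc⟩
  have hq1 : 1 < q := ha1.trans_le hq.1
  have hq_top : q ≠ ∞ := (hq.2.trans_lt hc_top).ne
  refine ⟨q, ⟨hq1, hq_top, (tsum_mul_pow_eq_self_iff hprob hq1 hq_top).2 hq_one⟩, ?_⟩
  rintro y ⟨hy1, hy_top, hy⟩
  rw [tsum_mul_pow_eq_self_iff hprob hy1 hy_top] at hy
  exact (pgfSlope_strictMonoOn hm hpm.ne' (hp m)).injOn (by simp [hy]) (by simp [hq_one])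
    (hy.trans hq_one.symm)
end

section
/- Let X be a single-type Galton–Watson process whose extinction probability is 1, with generating function f, and let A ≥ 1 satisfy f(A) = A with A finite. Define a new offspring distribution by p̂_m = p_m A^{m-1}. Then the Galton–Watson process with offspring distribution p̂ has extinction probability 1/A, and conditioned on extinction it has the law of X. -/
open MeasureTheory ProbabilityTheory ENNReal

/-!
Fix generation sizes `u₀ = 1, u₁, …, u_N`. The event that the process follows them is the
disjoint union, over offspring configurations `(c_{k,i})_{k < N, i < u_k}` with
`∑ᵢ c_{k,i} = u_{k+1}`, of cylinder events of probability `∏ p_{c_{k,i}}`. Passing from `p`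
to `p̂` multiplies every such product by `A ^ ∑ (c_{k,i} - 1) = A ^ (u_N - 1)`, whatever the
configuration, so `P̂[path u] ⬝ A = P[path u] ⬝ A ^ u_N`. For paths that are extinct at time `N`
this reads `P̂[path u] ⬝ A = P[path u]`; summing over such paths and letting `N → ∞` gives
`P̂[prefix ∩ extinction] ⬝ A = P[prefix ∩ extinction]`, which is `P[prefix]` because `X` dies out
almost surely. The empty prefix gives `P̂[extinction] = 1/A`.
-/

/-- The Galton–Watson process built from an array `ξ` of offspring variables:
`X 0 = 1` and `X (n+1) ω = ∑_{i < X n ω} ξ n i ω`. -/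
def gwProcess {Ω : Type*} (ξ : ℕ → ℕ → Ω → ℕ) : ℕ → Ω → ℕ
  | 0, _ => 1
  | n + 1, ω => ∑ i ∈ Finset.range (gwProcess ξ n ω), ξ n i ω

/-- The event that the Galton–Watson process eventually becomes extinct. -/
def gwExtinction {Ω : Type*} (ξ : ℕ → ℕ → Ω → ℕ) : Set Ω :=
  {ω | ∃ N, ∀ n ≥ N, gwProcess ξ n ω = 0}

section

variable {Ω : Type*}

lemma gwProcess_eq_zero_of_le {ξ : ℕ → ℕ → Ω → ℕ} {ω : Ω} {n m : ℕ}
    (hn : gwProcess ξ n ω = 0) (hnm : n ≤ m) : gwProcess ξ m ω = 0 := by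
  induction m, hnm using Nat.le_induction with
  | base => exact hn
  | succ m _ ih => simp [gwProcess, ih]

lemma gwExtinction_eq_iUnion (ξ : ℕ → ℕ → Ω → ℕ) (n : ℕ) :
    gwExtinction ξ = ⋃ m, {ω | gwProcess ξ (n + m) ω = 0} := by
  ext ω
  simp only [gwExtinction, Set.mem_ofPred_eq, Set.mem_iUnion]
  constructor
  · rintro ⟨N, hN⟩
    exact ⟨N, hN _ (Nat.le_add_left N n)⟩
  · rintro ⟨m, hm⟩
    exact ⟨n + m, fun k hk => gwProcess_eq_zero_of_le hm hk⟩

lemma monotone_setOf_gwProcess_add_eq_zero (ξ : ℕ → ℕ → Ω → ℕ) (n : ℕ) :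
    Monotone fun m => {ω | gwProcess ξ (n + m) ω = 0} :=
  fun _ _ hmm' _ hω => gwProcess_eq_zero_of_le hω (Nat.add_le_add_left hmm' n)

def gwPath (ξ : ℕ → ℕ → Ω → ℕ) (N : ℕ) (ω : Ω) : Fin (N + 1) → ℕ :=
  fun i => gwProcess ξ i ω

/-- The offspring numbers of the individuals that exist if the generation sizes are `u`. -/
def gwOffspring (ξ : ℕ → ℕ → Ω → ℕ) {N : ℕ} (u : Fin (N + 1) → ℕ) (ω : Ω) :
    (k : Fin N) → Fin (u k.castSucc) → ℕ :=
  fun k i => ξ k i ω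

def pathConfigs {N : ℕ} (u : Fin (N + 1) → ℕ) : Set ((k : Fin N) → Fin (u k.castSucc) → ℕ) :=
  {c | ∀ k, ∑ i, c k i = u k.succ}

lemma gwPath_preimage_singleton (ξ : ℕ → ℕ → Ω → ℕ) {N : ℕ} {u : Fin (N + 1) → ℕ}
    (hu : u 0 = 1) : gwPath ξ N ⁻¹' {u} = gwOffspring ξ u ⁻¹' pathConfigs u := by
  ext ω
  simp only [Set.mem_preimage, Set.mem_singleton_iff, pathConfigs, Set.mem_ofPred_eq]
  have hstep : ∀ k : Fin N, gwProcess ξ k ω = u k.castSucc →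
      (gwProcess ξ (k + 1) ω = u k.succ ↔ ∑ i, gwOffspring ξ u ω k i = u k.succ) := by
    intro k hk
    rw [gwProcess, hk, ← Fin.sum_univ_eq_sum_range]
    rfl
  constructor
  · rintro rfl k
    exact (hstep k rfl).1 rfl
  · intro hc
    funext i
    induction i using Fin.induction with
    | zero => exact hu.symm
    | succ k ih => exact (hstep k ih).2 (hc k)

lemma gwPath_preimage_singleton_eq_empty (ξ : ℕ → ℕ → Ω → ℕ) {N : ℕ} {u : Fin (N + 1) → ℕ}
    (hu : u 0 ≠ 1) : gwPath ξ N ⁻¹' {u} = ∅ :=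
  Set.eq_empty_of_forall_notMem fun _ hω => hu (congrFun hω 0).symm

lemma setOf_prefix_inter_extinct_eq_preimage_gwPath (ξ : ℕ → ℕ → Ω → ℕ) (v : ℕ → ℕ)
    (n m : ℕ) :
    {ω | ∀ i ≤ n, gwProcess ξ i ω = v i} ∩ {ω | gwProcess ξ (n + m) ω = 0} =
      gwPath ξ (n + m) ⁻¹'
        {u | (∀ i : Fin (n + m + 1), (i : ℕ) ≤ n → u i = v i) ∧ u (Fin.last _) = 0} := by
  ext ω
  simp only [Set.mem_inter_iff, Set.mem_ofPred_eq, Set.mem_preimage, gwPath, Fin.val_last]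
  exact and_congr_left' ⟨fun h i hi => h i hi, fun h i hi => h ⟨i, by omega⟩ hi⟩

section Measure

variable [MeasurableSpace Ω]

structure IsOffspringArray (P : Measure Ω) (ξ : ℕ → ℕ → Ω → ℕ) (p : ℕ → ℝ≥0∞) : Prop where
  measurable : ∀ n i, Measurable (ξ n i)
  indep : iIndepFun (fun (pr : ℕ × ℕ) ω => ξ pr.1 pr.2 ω) P
  law : ∀ n i m, P {ω | ξ n i ω = m} = p m

lemma measurable_gwProcess {ξ : ℕ → ℕ → Ω → ℕ} (hξ : ∀ n i, Measurable (ξ n i)) (n : ℕ) :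
    Measurable (gwProcess ξ n) := by
  induction n with
  | zero => exact measurable_const
  | succ n ih =>
    have hsum : Measurable fun aω : ℕ × Ω => ∑ i ∈ Finset.range aω.1, ξ n i aω.2 :=
      measurable_from_prod_countable_right fun a =>
        Finset.measurable_sum (Finset.range a) fun i _ => hξ n i
    exact hsum.comp (ih.prodMk measurable_id)

lemma measurableSet_gwExtinction {ξ : ℕ → ℕ → Ω → ℕ} (hξ : ∀ n i, Measurable (ξ n i)) :
    MeasurableSet (gwExtinction ξ) := by
  rw [gwExtinction_eq_iUnion ξ 0]
  exact .iUnion fun m => measurable_gwProcess hξ _ (measurableSet_singleton 0)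

lemma measurable_gwPath {ξ : ℕ → ℕ → Ω → ℕ} (hξ : ∀ n i, Measurable (ξ n i)) (N : ℕ) :
    Measurable (gwPath ξ N) :=
  measurable_pi_iff.mpr fun i => measurable_gwProcess hξ i

lemma measurable_gwOffspring {ξ : ℕ → ℕ → Ω → ℕ} (hξ : ∀ n i, Measurable (ξ n i)) {N : ℕ}
    (u : Fin (N + 1) → ℕ) : Measurable (gwOffspring ξ u) :=
  measurable_pi_iff.mpr fun k => measurable_pi_iff.mpr fun i => hξ k i

variable {P : Measure Ω} {ξ : ℕ → ℕ → Ω → ℕ} {p : ℕ → ℝ≥0∞}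

lemma IsOffspringArray.measure_gwOffspring_preimage_singleton (hξ : IsOffspringArray P ξ p)
    {N : ℕ} (u : Fin (N + 1) → ℕ) (c : (k : Fin N) → Fin (u k.castSucc) → ℕ) :
    P (gwOffspring ξ u ⁻¹' {c}) = ∏ k, ∏ i, p (c k i) := by
  let idx : (Σ k : Fin N, Fin (u k.castSucc)) → ℕ × ℕ := fun j => (j.1, j.2)
  have hidx : Function.Injective idx := by
    rintro ⟨k, i⟩ ⟨k', i'⟩ h
    simp only [idx, Prod.mk.injEq] at h
    obtain rfl := Fin.ext h.1
    obtain rfl := Fin.ext h.2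
    rfl
  have hcyl : gwOffspring ξ u ⁻¹' {c} =
      ⋂ j ∈ Finset.univ, (fun ω => ξ (idx j).1 (idx j).2 ω) ⁻¹' {c j.1 j.2} := by
    ext ω
    simp [gwOffspring, idx, funext_iff, Sigma.forall]
  rw [hcyl, (hξ.indep.precomp hidx).measure_inter_preimage_eq_mul _
    fun _ _ => measurableSet_singleton _, Fintype.prod_sigma]
  exact Finset.prod_congr rfl fun k _ => Finset.prod_congr rfl fun i _ => hξ.law _ _ _

lemma IsOffspringArray.measure_gwPath_preimage_singleton (hξ : IsOffspringArray P ξ p)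
    {N : ℕ} {u : Fin (N + 1) → ℕ} (hu : u 0 = 1) :
    P (gwPath ξ N ⁻¹' {u}) = ∑' c : pathConfigs u, ∏ k, ∏ i, p (c.1 k i) := by
  rw [gwPath_preimage_singleton ξ hu, ← tsum_measure_preimage_singleton (Set.to_countable _)
    fun c _ => measurable_gwOffspring hξ.measurable u (measurableSet_singleton c)]
  exact tsum_congr fun c => hξ.measure_gwOffspring_preimage_singleton u c

end Measure

section Conjugate

variable {p phat : ℕ → ℝ≥0∞} {A : ℝ≥0∞}

lemma prod_pathConfigs_mul (hA0 : A ≠ 0) (hAtop : A ≠ ⊤)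
    (hphat : ∀ m, phat m * A = p m * A ^ m) {N : ℕ} {u : Fin (N + 1) → ℕ} (hu : u 0 = 1)
    {c : (k : Fin N) → Fin (u k.castSucc) → ℕ} (hc : c ∈ pathConfigs u) :
    (∏ k, ∏ i, phat (c k i)) * A = (∏ k, ∏ i, p (c k i)) * A ^ u (Fin.last N) := by
  have hsum : ∑ k, ∑ i, c k i + u 0 = ∑ k : Fin N, u k.castSucc + u (Fin.last N) := by
    rw [Finset.sum_congr rfl fun k _ => hc k, add_comm, ← Fin.sum_univ_succ,
      Fin.sum_univ_castSucc]
  -- one factor `A` for each of the `u₀ + ⋯ + u_{N-1}` parents, so that no `A⁻¹` appears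
  rw [← ENNReal.mul_left_inj (pow_ne_zero (∑ k : Fin N, u k.castSucc) hA0) (pow_ne_top hAtop)]
  calc (∏ k, ∏ i, phat (c k i)) * A * A ^ ∑ k : Fin N, u k.castSucc
      = (∏ k, ∏ i, phat (c k i) * A) * A := by
        simp only [Finset.prod_mul_distrib, Finset.prod_const, Finset.card_univ,
          Fintype.card_fin, Finset.prod_pow_eq_pow_sum]
        ring
    _ = (∏ k, ∏ i, p (c k i) * A ^ c k i) * A := by simp only [hphat]
    _ = (∏ k, ∏ i, p (c k i)) * A ^ (∑ k, ∑ i, c k i + u 0) := by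
        rw [hu, pow_succ]
        simp only [Finset.prod_mul_distrib, Finset.prod_pow_eq_pow_sum, mul_assoc]
    _ = (∏ k, ∏ i, p (c k i)) * A ^ u (Fin.last N) * A ^ ∑ k : Fin N, u k.castSucc := by
        rw [hsum, pow_add]
        ring

variable [MeasurableSpace Ω] {P : Measure Ω} {ξ : ℕ → ℕ → Ω → ℕ}
  {Ω' : Type*} [MeasurableSpace Ω'] {P' : Measure Ω'} {ξ' : ℕ → ℕ → Ω' → ℕ}

lemma measure_gwPath_preimage_singleton_mul (hξ : IsOffspringArray P ξ p)
    (hξ' : IsOffspringArray P' ξ' phat) (hA0 : A ≠ 0) (hAtop : A ≠ ⊤)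
    (hphat : ∀ m, phat m * A = p m * A ^ m) {N : ℕ} (u : Fin (N + 1) → ℕ) :
    P' (gwPath ξ' N ⁻¹' {u}) * A = P (gwPath ξ N ⁻¹' {u}) * A ^ u (Fin.last N) := by
  by_cases hu : u 0 = 1
  · rw [hξ'.measure_gwPath_preimage_singleton hu, hξ.measure_gwPath_preimage_singleton hu,
      ← ENNReal.tsum_mul_right, ← ENNReal.tsum_mul_right]
    exact tsum_congr fun c => prod_pathConfigs_mul hA0 hAtop hphat hu c.2
  · simp [gwPath_preimage_singleton_eq_empty _ hu]

lemma measure_gwPath_preimage_mul_of_extinct (hξ : IsOffspringArray P ξ p)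
    (hξ' : IsOffspringArray P' ξ' phat) (hA0 : A ≠ 0) (hAtop : A ≠ ⊤)
    (hphat : ∀ m, phat m * A = p m * A ^ m) {N : ℕ} (S : Set (Fin (N + 1) → ℕ))
    (hS : ∀ u ∈ S, u (Fin.last N) = 0) :
    P' (gwPath ξ' N ⁻¹' S) * A = P (gwPath ξ N ⁻¹' S) := by
  rw [← tsum_measure_preimage_singleton S.to_countable
      fun u _ => measurable_gwPath hξ'.measurable N (measurableSet_singleton u),
    ← tsum_measure_preimage_singleton S.to_countable
      fun u _ => measurable_gwPath hξ.measurable N (measurableSet_singleton u),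
    ← ENNReal.tsum_mul_right]
  refine tsum_congr fun u => ?_
  rw [measure_gwPath_preimage_singleton_mul hξ hξ' hA0 hAtop hphat, hS u u.2, pow_zero, mul_one]

lemma measure_prefix_inter_gwExtinction_mul (hξ : IsOffspringArray P ξ p)
    (hξ' : IsOffspringArray P' ξ' phat) (hA0 : A ≠ 0) (hAtop : A ≠ ⊤)
    (hphat : ∀ m, phat m * A = p m * A ^ m) (n : ℕ) (v : ℕ → ℕ) :
    P' ({ω | ∀ i ≤ n, gwProcess ξ' i ω = v i} ∩ gwExtinction ξ') * A
      = P ({ω | ∀ i ≤ n, gwProcess ξ i ω = v i} ∩ gwExtinction ξ) := by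
  rw [gwExtinction_eq_iUnion ξ' n, gwExtinction_eq_iUnion ξ n, Set.inter_iUnion, Set.inter_iUnion,
    (monotone_const.inter (monotone_setOf_gwProcess_add_eq_zero ξ' n)).measure_iUnion,
    (monotone_const.inter (monotone_setOf_gwProcess_add_eq_zero ξ n)).measure_iUnion,
    ENNReal.iSup_mul]
  refine iSup_congr fun m => ?_
  simp only [setOf_prefix_inter_extinct_eq_preimage_gwPath]
  exact measure_gwPath_preimage_mul_of_extinct hξ hξ' hA0 hAtop hphat _ fun _ hu => hu.2

end Conjugate

end

theorem gw_conjugate_process_general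
    {Ω : Type*} [MeasurableSpace Ω] (P : Measure Ω) [IsProbabilityMeasure P]
    (ξ : ℕ → ℕ → Ω → ℕ) (hmeas : ∀ n i, Measurable (ξ n i))
    (hindep : iIndepFun (fun (pr : ℕ × ℕ) ω => ξ pr.1 pr.2 ω) P)
    (p : ℕ → ℝ≥0∞) (hlaw : ∀ n i m, P {ω | ξ n i ω = m} = p m)
    (hext : P (gwExtinction ξ) = 1)
    (A : ℝ≥0∞) (hA1 : 1 ≤ A) (hAtop : A ≠ ⊤)
    (phat : ℕ → ℝ≥0∞) (hphat : ∀ m, phat m * A = p m * A ^ m)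
    {Ω' : Type*} [MeasurableSpace Ω'] (P' : Measure Ω')
    (ξ' : ℕ → ℕ → Ω' → ℕ) (hmeas' : ∀ n i, Measurable (ξ' n i))
    (hindep' : iIndepFun (fun (pr : ℕ × ℕ) ω => ξ' pr.1 pr.2 ω) P')
    (hlaw' : ∀ n i m, P' {ω | ξ' n i ω = m} = phat m) :
    P' (gwExtinction ξ') = A⁻¹ ∧
      ∀ (n : ℕ) (v : ℕ → ℕ),
        P' ({ω | ∀ i ≤ n, gwProcess ξ' i ω = v i} ∩ gwExtinction ξ') * A
          = P {ω | ∀ i ≤ n, gwProcess ξ i ω = v i} := by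
  have hA0 : A ≠ 0 := (zero_lt_one.trans_le hA1).ne'
  have key := measure_prefix_inter_gwExtinction_mul ⟨hmeas, hindep, hlaw⟩
    ⟨hmeas', hindep', hlaw'⟩ hA0 hAtop hphat
  have hconull : P (gwExtinction ξ)ᶜ = 0 :=
    (prob_compl_eq_zero_iff (measurableSet_gwExtinction hmeas)).mpr hext
  refine ⟨?_, fun n v => by rw [key, measure_inter_conull hconull]⟩
  have hroot := key 0 fun _ => 1
  simp only [nonpos_iff_eq_zero, forall_eq, gwProcess, Set.ofPred_true, Set.univ_inter,
    hext] at hroot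
  exact ENNReal.eq_inv_of_mul_eq_one_left hroot

/-- Let `X` be a single-type Galton–Watson process with offspring
distribution `p` and extinction probability `1`, and let `A ∈ [1,∞)` be a finite fixed
point of its generating function. Define `p̂ₘ = pₘ A^{m-1}` (stated as `p̂ₘ ⬝ A = pₘ Aᵐ`),
and let `X̂` be a Galton–Watson process with offspring distribution `p̂`. Then `X̂` has
extinction probability `1/A`, and conditioned on extinction `X̂` has the law of `X`:
for every finite trajectory, `P̂[X̂ follows it and dies out] ⬝ A = P[X follows it]`. -/
theorem gw_conjugate_process
    {Ω : Type*} [MeasurableSpace Ω] (P : Measure Ω) [IsProbabilityMeasure P]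
    (ξ : ℕ → ℕ → Ω → ℕ) (hmeas : ∀ n i, Measurable (ξ n i))
    (hindep : iIndepFun (fun (pr : ℕ × ℕ) ω => ξ pr.1 pr.2 ω) P)
    (p : ℕ → ℝ≥0∞) (hlaw : ∀ n i m, P {ω | ξ n i ω = m} = p m)
    (hprob : ∑' m, p m = 1)
    (hext : P (gwExtinction ξ) = 1)
    (A : ℝ≥0∞) (hA1 : 1 ≤ A) (hAtop : A ≠ ⊤)
    (hfix : ∑' m, p m * A ^ m = A)
    (phat : ℕ → ℝ≥0∞) (hphat : ∀ m, phat m * A = p m * A ^ m)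
    {Ω' : Type*} [MeasurableSpace Ω'] (P' : Measure Ω') [IsProbabilityMeasure P']
    (ξ' : ℕ → ℕ → Ω' → ℕ) (hmeas' : ∀ n i, Measurable (ξ' n i))
    (hindep' : iIndepFun (fun (pr : ℕ × ℕ) ω => ξ' pr.1 pr.2 ω) P')
    (hlaw' : ∀ n i m, P' {ω | ξ' n i ω = m} = phat m) :
    P' (gwExtinction ξ') = A⁻¹ ∧
      ∀ (n : ℕ) (v : ℕ → ℕ),
        P' ({ω | ∀ i ≤ n, gwProcess ξ' i ω = v i} ∩ gwExtinction ξ') * A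
          = P {ω | ∀ i ≤ n, gwProcess ξ i ω = v i} :=
  gw_conjugate_process_general P ξ hmeas hindep p hlaw hext A hA1 hAtop phat hphat P' ξ' hmeas'
    hindep' hlaw'
end

section
/- Consider a d-type branching process for which the extinction probability from every initial type is one, and let f : (0,∞)^d → (0,∞]^d be its generating function. If q ∈ (0,∞)^d satisfies f(q) = q, then q_k ≥ 1 for every k ∈ {1,…,d}. -/
open MeasureTheory ProbabilityTheory ENNReal Filter Set

/-- Extended exponential `[0,∞] → [1,∞]`. -/
noncomputable def eexp (x : ℝ≥0∞) : ℝ≥0∞ :=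
  if x = ⊤ then ⊤ else ENNReal.ofReal (Real.exp x.toReal)

/-- Extended logarithm, suitable for values in `[1,∞]`. -/
noncomputable def elog (y : ℝ≥0∞) : ℝ≥0∞ :=
  if y = ⊤ then ⊤ else ENNReal.ofReal (Real.log y.toReal)

/-- The generating function of the `n`-th generation of a `d`-type branching process:
`F P X n q k = 𝔼ₖ[∏ⱼ qⱼ ^ Xⱼ(n)]`, where `P k` is the law of the process started from a
single individual of type `k`. Values are in `[0,∞]`, with the conventions `∞ ^ 0 = 1`
and `∞ ^ x = ∞` for `x > 0` built into `ℝ≥0∞`. -/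
noncomputable def genFun {d : ℕ} {Ω : Type*} [MeasurableSpace Ω]
    (P : Fin d → Measure Ω) (X : ℕ → Ω → Fin d → ℕ) (n : ℕ)
    (q : Fin d → ℝ≥0∞) : Fin d → ℝ≥0∞ :=
  fun k => ∫⁻ ω, ∏ j, (q j) ^ (X n ω j) ∂ (P k)

/-- The log-Laplace transform of the `n`-th generation:
`logGenFun P X n λ k = log 𝔼ₖ[exp (∑ⱼ λⱼ Xⱼ(n))]`, i.e. `g⁽ⁿ⁾(λ) = log f⁽ⁿ⁾(e^λ)`
componentwise, viewed as a map `[0,∞]^d → [0,∞]^d`. -/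
noncomputable def logGenFun {d : ℕ} {Ω : Type*} [MeasurableSpace Ω]
    (P : Fin d → Measure Ω) (X : ℕ → Ω → Fin d → ℕ) (n : ℕ)
    (l : Fin d → ℝ≥0∞) : Fin d → ℝ≥0∞ :=
  fun k => elog (genFun P X n (fun j => eexp (l j)) k)

/-- The event that the branching process eventually becomes extinct. -/
def ExtinctionEvent {d : ℕ} {Ω : Type*} (X : ℕ → Ω → Fin d → ℕ) : Set Ω :=
  {ω | ∃ N, ∀ n ≥ N, X n ω = 0}

/-- Positive regularity: for some `N`, started from any type `k`, there is a positive
chance of having an individual of type `j` in generation `N`, for every `j`. -/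
def PositiveRegular {d : ℕ} {Ω : Type*} [MeasurableSpace Ω]
    (P : Fin d → Measure Ω) (X : ℕ → Ω → Fin d → ℕ) : Prop :=
  ∃ N, ∀ k j, 0 < P k {ω | 1 ≤ X N ω j}

/-- Non-singularity: some type has a positive chance of at least two total offspring. -/
def NonSingular {d : ℕ} {Ω : Type*} [MeasurableSpace Ω]
    (P : Fin d → Measure Ω) (X : ℕ → Ω → Fin d → ℕ) : Prop :=
  ∃ k, 0 < P k {ω | 2 ≤ ∑ j, X 1 ω j}

/-- The mean matrix `M k j = 𝔼ₖ[Xⱼ(1)]`. -/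
noncomputable def meanMatrix {d : ℕ} {Ω : Type*} [MeasurableSpace Ω]
    (P : Fin d → Measure Ω) (X : ℕ → Ω → Fin d → ℕ) : Matrix (Fin d) (Fin d) ℝ :=
  fun k j => (∫⁻ ω, (X 1 ω j : ℝ≥0∞) ∂ (P k)).toReal

/-- Subcriticality: the mean matrix has finite entries and all of its (complex)
eigenvalues have modulus `< 1`; for a nonnegative matrix this says exactly that the
largest (Perron–Frobenius) eigenvalue is `< 1`. -/
def Subcritical {d : ℕ} {Ω : Type*} [MeasurableSpace Ω]
    (P : Fin d → Measure Ω) (X : ℕ → Ω → Fin d → ℕ) : Prop :=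
  (∀ k j, ∫⁻ ω, (X 1 ω j : ℝ≥0∞) ∂ (P k) ≠ ⊤) ∧
    ∀ μ ∈ spectrum ℂ ((meanMatrix P X).map (Complex.ofReal)), ‖μ‖ < 1

/-- Continuity of each component of the generating function on `(0,∞]^d`
(Hypothesis III of the main theorem). -/
def GenFunContinuous {d : ℕ} {Ω : Type*} [MeasurableSpace Ω]
    (P : Fin d → Measure Ω) (X : ℕ → Ω → Fin d → ℕ) : Prop :=
  ∀ k, ContinuousOn (fun q => genFun P X 1 q k) {q : Fin d → ℝ≥0∞ | ∀ j, 0 < q j}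

/-!
Iterating the fixed-point equation gives `𝔼ₖ[∏ⱼ qⱼ ^ Xⱼ(n)] = qₖ` for every `n`. On the
extinction event the integrand is eventually `1`, so by Fatou's lemma
`1 = Pₖ(extinction) ≤ liminf 𝔼ₖ[∏ⱼ qⱼ ^ Xⱼ(n)] = qₖ`.
-/

theorem measure_le_liminf_lintegral {α : Type*} [MeasurableSpace α] {μ : Measure α}
    {f : ℕ → α → ℝ≥0∞} (hf : ∀ n, Measurable (f n)) {s : Set α}
    (hs : ∀ x ∈ s, ∀ᶠ n in atTop, 1 ≤ f n x) :
    μ s ≤ liminf (fun n => ∫⁻ x, f n x ∂μ) atTop :=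
  calc μ s ≤ μ {x | 1 ≤ liminf (fun n => f n x) atTop} :=
        measure_mono fun x hx => le_liminf_of_le (by isBoundedDefault) (hs x hx)
    _ ≤ ∫⁻ x, liminf (fun n => f n x) atTop ∂μ := by
        simpa only [one_mul] using mul_meas_ge_le_lintegral (Measurable.liminf hf) 1
    _ ≤ liminf (fun n => ∫⁻ x, f n x ∂μ) atTop := lintegral_liminf_le hf

section BranchingProcess

variable {d : ℕ} {Ω : Type*} {X : ℕ → Ω → Fin d → ℕ}

theorem eventually_prod_pow_eq_one {ω : Ω} (hω : ω ∈ ExtinctionEvent X) (q : Fin d → ℝ≥0∞) :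
    ∀ᶠ n in atTop, ∏ j, q j ^ X n ω j = 1 := by
  obtain ⟨N, hN⟩ := hω
  filter_upwards [eventually_ge_atTop N] with n hn
  simp [hN n hn]

variable [MeasurableSpace Ω]

theorem measurable_prod_pow {n : ℕ} (hX : Measurable (X n)) (q : Fin d → ℝ≥0∞) :
    Measurable fun ω => ∏ j, q j ^ X n ω j :=
  Finset.measurable_prod _ fun j _ => (measurable_from_nat (f := (q j ^ ·))).comp hX.eval

theorem genFun_eq_of_isFixedPt {P : Fin d → Measure Ω}
    (hiter : ∀ n q, (genFun P X 1)^[n] q = genFun P X n q) {q : Fin d → ℝ≥0∞}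
    (hfix : Function.IsFixedPt (genFun P X 1) q) (n : ℕ) : genFun P X n q = q := by
  rw [← hiter]
  exact Function.iterate_fixed hfix n

end BranchingProcess

theorem fixed_point_ge_one_general
    {d : ℕ} {Ω : Type*} [MeasurableSpace Ω]
    (P : Fin d → Measure Ω) (X : ℕ → Ω → Fin d → ℕ)
    (hmeas : ∀ n, Measurable (X n))
    (hiter : ∀ n q, (genFun P X 1)^[n] q = genFun P X n q)
    (hext : ∀ k, P k (ExtinctionEvent X) = 1)
    (q : Fin d → ℝ≥0∞)
    (hfix : genFun P X 1 q = q) :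
    ∀ k, 1 ≤ q k := by
  intro k
  calc 1 = P k (ExtinctionEvent X) := (hext k).symm
    _ ≤ liminf (fun n => genFun P X n q k) atTop :=
        measure_le_liminf_lintegral (fun n => measurable_prod_pow (hmeas n) q)
          fun ω hω => (eventually_prod_pow_eq_one hω q).mono fun _ h => h.ge
    _ = q k := by simp only [genFun_eq_of_isFixedPt hiter hfix, liminf_const]

/-- For a `d`-type branching process whose extinction probability from
every initial type is one, any fixed point `q ∈ (0,∞)^d` of the generating function
satisfies `q k ≥ 1` for every `k`. -/
theorem fixed_point_ge_one
    {d : ℕ} {Ω : Type*} [MeasurableSpace Ω]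
    (P : Fin d → Measure Ω) (X : ℕ → Ω → Fin d → ℕ)
    (hprob : ∀ k, IsProbabilityMeasure (P k))
    (hmeas : ∀ n, Measurable (X n))
    (hiter : ∀ n q, (genFun P X 1)^[n] q = genFun P X n q)
    (hext : ∀ k, P k (ExtinctionEvent X) = 1)
    (q : Fin d → ℝ≥0∞) (hq : ∀ k, 0 < q k ∧ q k ≠ ⊤)
    (hfix : genFun P X 1 q = q) :
    ∀ k, 1 ≤ q k :=
  fixed_point_ge_one_general P X hmeas hiter hext q hfix
end

section
/- Let X be a subcritical d-type branching process with a.s. extinction, and g^{(n)}(λ)_k = log E_k[exp(Σ_j λ_j X_j(n))]. Fix λ ∈ [0,∞)^d \ {0} with limsup_n |g^{(n)}(λ)| < ∞. Then for every r ∈ [0,1), lim_n |g^{(n)}(rλ)| = 0. -/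
open MeasureTheory ProbabilityTheory ENNReal Filter Set

/-! Write `W = ∏ⱼ exp (λⱼ Xⱼ(n))`; the integrand of `g⁽ⁿ⁾(rλ)` is `W ^ r`, which equals `1` on
`{X(n) = 0}`. Hölder's inequality with exponents `1/r` and `1/(1-r)` on the complement gives
`𝔼ₖ[W ^ r] ≤ 1 + 𝔼ₖ[W] ^ r · Pₖ(X(n) ≠ 0) ^ (1 - r)`. Here `𝔼ₖ[W]` stays bounded by the limsup
hypothesis and `Pₖ(X(n) ≠ 0) → 0` by almost sure extinction, so `𝔼ₖ[W ^ r] → 1`. -/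

open Topology

lemma one_le_eexp (x : ℝ≥0∞) : 1 ≤ eexp x := by
  unfold eexp
  split_ifs
  · exact le_top
  · exact ENNReal.one_le_ofReal.mpr (Real.one_le_exp ENNReal.toReal_nonneg)

lemma eexp_ne_top {x : ℝ≥0∞} (hx : x ≠ ⊤) : eexp x ≠ ⊤ := by
  simp [eexp, hx]

lemma eexp_mul_eq_rpow {r x : ℝ≥0∞} (hr : r ≠ ⊤) (hx : x ≠ ⊤) :
    eexp (r * x) = eexp x ^ r.toReal := by
  rw [eexp, eexp, if_neg (ENNReal.mul_ne_top hr hx), if_neg hx, ENNReal.toReal_mul,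
    mul_comm r.toReal, Real.exp_mul, ← ENNReal.ofReal_rpow_of_pos (Real.exp_pos _)]

lemma le_eexp_of_elog_le {y c : ℝ≥0∞} (h : elog y ≤ c) (hc : c ≠ ⊤) : y ≤ eexp c := by
  rcases le_or_gt y 1 with hy1 | hy1
  · exact hy1.trans (one_le_eexp c)
  have hy : y ≠ ⊤ := by
    rintro rfl
    exact hc (top_le_iff.mp (by simpa [elog] using h))
  have hlog : Real.log y.toReal ≤ c.toReal := by
    rw [elog, if_neg hy] at h
    exact (ENNReal.ofReal_le_iff_le_toReal hc).mp h
  have hpos : 0 < y.toReal := ENNReal.toReal_pos (zero_lt_one.trans hy1).ne' hy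
  rw [eexp, if_neg hc, ← ENNReal.ofReal_toReal hy, ← Real.exp_log hpos]
  exact ENNReal.ofReal_le_ofReal (Real.exp_le_exp.mpr hlog)

lemma tendsto_elog_of_tendsto_one {α : Type*} {f : Filter α} {a : α → ℝ≥0∞}
    (h : Tendsto a f (𝓝 1)) : Tendsto (fun n => elog (a n)) f (𝓝 0) := by
  have hlog : Tendsto (fun n => ENNReal.ofReal (Real.log (a n).toReal)) f (𝓝 0) := by
    simpa [Function.comp_def] using (ENNReal.continuous_ofReal.tendsto _).comp
      ((Real.continuousAt_log one_ne_zero).tendsto.comp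
        ((ENNReal.tendsto_toReal ENNReal.one_ne_top).comp h))
  refine hlog.congr' ?_
  filter_upwards [h.eventually_lt_const ENNReal.one_lt_two] with n hn
  simp [elog, hn.ne_top]

lemma lintegral_rpow_le_measure_add {Ω : Type*} [MeasurableSpace Ω] (μ : Measure Ω)
    {f : Ω → ℝ≥0∞} (hf : AEMeasurable f μ) {s : Set Ω} (hs : MeasurableSet s)
    (hfs : ∀ ω ∈ s, f ω ≤ 1) {p : ℝ} (hp0 : 0 ≤ p) (hp1 : p ≤ 1) :
    ∫⁻ ω, f ω ^ p ∂μ ≤ μ s + (∫⁻ ω, f ω ∂μ) ^ p * μ sᶜ ^ (1 - p) := by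
  rw [← lintegral_add_compl _ hs]
  gcongr
  · calc ∫⁻ ω in s, f ω ^ p ∂μ ≤ ∫⁻ _ in s, 1 ∂μ :=
          setLIntegral_mono measurable_const fun ω hω => ENNReal.rpow_le_one (hfs ω hω) hp0
      _ = μ s := by simp
  · calc ∫⁻ ω in sᶜ, f ω ^ p ∂μ = ∫⁻ ω in sᶜ, f ω ^ p * 1 ^ (1 - p) ∂μ := by simp
      _ ≤ (∫⁻ ω in sᶜ, f ω ∂μ) ^ p * (∫⁻ _ in sᶜ, 1 ∂μ) ^ (1 - p) :=
          ENNReal.lintegral_mul_norm_pow_le hf.restrict aemeasurable_const hp0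
            (by linarith) (by ring)
      _ ≤ (∫⁻ ω, f ω ∂μ) ^ p * μ sᶜ ^ (1 - p) := by
          gcongr
          · exact Measure.restrict_le_self
          · simp

lemma tendsto_one_add_mul_rpow {α : Type*} {f : Filter α} {c : ℝ≥0∞} (hc : c ≠ ⊤)
    {u : α → ℝ≥0∞} (hu : Tendsto u f (𝓝 0)) {q : ℝ} (hq : 0 < q) :
    Tendsto (fun a => 1 + c * u a ^ q) f (𝓝 1) := by
  have hpow : Tendsto (fun a => u a ^ q) f (𝓝 0) := by
    simpa [Function.comp_def, ENNReal.zero_rpow_of_pos hq] using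
      (ENNReal.continuous_rpow_const (y := q) |>.tendsto 0).comp hu
  simpa using (ENNReal.Tendsto.const_mul hpow (Or.inr hc)).const_add 1

section BranchingProcess

variable {d : ℕ} {Ω : Type*} [MeasurableSpace Ω] {P : Fin d → Measure Ω}
  {X : ℕ → Ω → Fin d → ℕ}

lemma measurableSet_extinctionEvent (hmeas : ∀ n, Measurable (X n)) :
    MeasurableSet (ExtinctionEvent X) := by
  simp only [ExtinctionEvent, ofPred_exists, ofPred_forall]
  exact .iUnion fun _ => .iInter fun n => .iInter fun _ => hmeas n (measurableSet_singleton 0)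

lemma tendsto_measure_ne_zero_of_ae_extinction {μ : Measure Ω} [IsFiniteMeasure μ]
    (hmeas : ∀ n, Measurable (X n)) (hext : ∀ᵐ ω ∂μ, ω ∈ ExtinctionEvent X) :
    Tendsto (fun n => μ {ω | X n ω ≠ 0}) atTop (𝓝 0) := by
  have hS : ∀ n, MeasurableSet {ω | X n ω ≠ 0} := fun n =>
    (hmeas n (measurableSet_singleton 0)).compl
  have hlim : ∀ᵐ ω ∂μ,
      Tendsto (fun n => {ω | X n ω ≠ 0}.indicator (1 : Ω → ℝ≥0∞) ω) atTop (𝓝 0) := by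
    filter_upwards [hext] with ω ⟨N, hN⟩
    refine tendsto_const_nhds.congr' ((eventually_ge_atTop N).mono fun n hn => ?_)
    simp [hN n hn]
  simp_rw [← lintegral_indicator_one (hS _)]
  simpa using tendsto_lintegral_of_dominated_convergence 1
    (fun n => measurable_one.indicator (hS n))
    (fun n => .of_forall (indicator_le_self' fun _ _ => zero_le)) (by simp) hlim

lemma one_le_genFun {n : ℕ} {q : Fin d → ℝ≥0∞} (hq : ∀ j, 1 ≤ q j) (k : Fin d)
    [IsProbabilityMeasure (P k)] : 1 ≤ genFun P X n q k :=
  calc 1 = ∫⁻ _, 1 ∂P k := by simp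
    _ ≤ genFun P X n q k :=
      lintegral_mono fun _ => Finset.one_le_prod' fun j _ => one_le_pow_of_one_le' (hq j) _

lemma genFun_eexp_mul_le {n : ℕ} {k : Fin d} [IsProbabilityMeasure (P k)]
    (hX : Measurable (X n)) {l : Fin d → ℝ≥0∞} (hl : ∀ j, l j ≠ ⊤) {r : ℝ≥0∞} (hr : r < 1) :
    genFun P X n (fun j => eexp (r * l j)) k ≤
      1 + genFun P X n (fun j => eexp (l j)) k ^ r.toReal
        * P k {ω | X n ω ≠ 0} ^ (1 - r.toReal) := by
  have hprod : ∀ x : Fin d → ℕ,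
      ∏ j, eexp (r * l j) ^ x j = (∏ j, eexp (l j) ^ x j) ^ r.toReal := by
    intro x
    rw [← ENNReal.prod_rpow_of_nonneg ENNReal.toReal_nonneg]
    refine Finset.prod_congr rfl fun j _ => ?_
    rw [eexp_mul_eq_rpow hr.ne_top (hl j), ← ENNReal.rpow_natCast, ← ENNReal.rpow_natCast,
      ← ENNReal.rpow_mul, ← ENNReal.rpow_mul, mul_comm]
  have hr1 : r.toReal ≤ 1 := ENNReal.toReal_le_of_le_ofReal zero_le_one (by simpa using hr.le)
  calc genFun P X n (fun j => eexp (r * l j)) k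
      = ∫⁻ ω, (∏ j, eexp (l j) ^ X n ω j) ^ r.toReal ∂P k :=
        lintegral_congr fun ω => hprod (X n ω)
    _ ≤ P k {ω | X n ω = 0} + genFun P X n (fun j => eexp (l j)) k ^ r.toReal
          * P k {ω | X n ω = 0}ᶜ ^ (1 - r.toReal) :=
        lintegral_rpow_le_measure_add _ ((measurable_of_countable
            fun x : Fin d → ℕ => ∏ j, eexp (l j) ^ x j).comp hX).aemeasurable
          (hX (measurableSet_singleton 0)) (fun ω hω => by simp [show X n ω = 0 from hω])
          ENNReal.toReal_nonneg hr1
    _ ≤ _ := add_le_add prob_le_one le_rfl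

end BranchingProcess

theorem logGenFun_scaled_tendsto_zero_general
    {d : ℕ} {Ω : Type*} [MeasurableSpace Ω]
    (P : Fin d → Measure Ω) (X : ℕ → Ω → Fin d → ℕ)
    (hprob : ∀ k, IsProbabilityMeasure (P k))
    (hmeas : ∀ n, Measurable (X n))
    (hext : ∀ k, P k (ExtinctionEvent X) = 1)
    (l : Fin d → ℝ≥0∞) (hlfin : ∀ j, l j ≠ ⊤)
    (hbdd : limsup (fun n => ∑ k, logGenFun P X n l k) atTop ≠ ⊤) :
    ∀ r : ℝ≥0∞, r < 1 →
      Tendsto (fun n => logGenFun P X n (fun j => r * l j)) atTop (nhds 0) := by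
  intro r hr
  obtain ⟨C, hC, hCev⟩ : ∃ C ≠ ⊤, ∀ᶠ n in atTop, ∑ k, logGenFun P X n l k ≤ C :=
    ⟨_, ENNReal.add_ne_top.2 ⟨hbdd, ENNReal.one_ne_top⟩,
      (eventually_lt_of_limsup_lt (ENNReal.lt_add_right hbdd one_ne_zero)).mono fun _ => le_of_lt⟩
  have hr1 : 0 < 1 - r.toReal := sub_pos.2 (ENNReal.toReal_lt_of_lt_ofReal (by simpa using hr))
  rw [tendsto_pi_nhds]
  intro k
  have hsurv : Tendsto (fun n => P k {ω | X n ω ≠ 0}) atTop (𝓝 0) :=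
    tendsto_measure_ne_zero_of_ae_extinction hmeas <|
      (ae_iff_measure_eq (measurableSet_extinctionEvent hmeas).nullMeasurableSet).2
        (by rw [measure_univ]; exact hext k)
  have hbound := tendsto_one_add_mul_rpow
    (ENNReal.rpow_ne_top_of_nonneg (y := r.toReal) ENNReal.toReal_nonneg (eexp_ne_top hC)) hsurv hr1
  refine tendsto_elog_of_tendsto_one (tendsto_of_tendsto_of_tendsto_of_le_of_le'
    tendsto_const_nhds hbound (.of_forall fun n => one_le_genFun (fun _ => one_le_eexp _) k) ?_)
  filter_upwards [hCev] with n hn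
  refine (genFun_eexp_mul_le (hmeas n) hlfin hr).trans ?_
  gcongr
  exact le_eexp_of_elog_le
    ((Finset.single_le_sum (fun _ _ => zero_le) (Finset.mem_univ k)).trans hn) hC

/-- Let `X` be a subcritical `d`-type branching process with a.s.
extinction, and `g⁽ⁿ⁾(λ)ₖ = log 𝔼ₖ[exp (∑ⱼ λⱼ Xⱼ(n))]`. Fix `λ ∈ [0,∞)^d \ {0}` with
`limsup_n |g⁽ⁿ⁾(λ)| < ∞`. Then for every `r ∈ [0,1)`, `lim_n |g⁽ⁿ⁾(rλ)| = 0`. -/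
theorem logGenFun_scaled_tendsto_zero
    {d : ℕ} {Ω : Type*} [MeasurableSpace Ω]
    (P : Fin d → Measure Ω) (X : ℕ → Ω → Fin d → ℕ)
    (hprob : ∀ k, IsProbabilityMeasure (P k))
    (hmeas : ∀ n, Measurable (X n))
    (hGiter : ∀ n l, (logGenFun P X 1)^[n] l = logGenFun P X n l)
    (hsub : Subcritical P X)
    (hext : ∀ k, P k (ExtinctionEvent X) = 1)
    (l : Fin d → ℝ≥0∞) (hlfin : ∀ j, l j ≠ ⊤) (hl0 : l ≠ 0)
    (hbdd : limsup (fun n => ∑ k, logGenFun P X n l k) atTop ≠ ⊤) :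
    ∀ r : ℝ≥0∞, r < 1 →
      Tendsto (fun n => logGenFun P X n (fun j => r * l j)) atTop (nhds 0) :=
  logGenFun_scaled_tendsto_zero_general P X hprob hmeas hext l hlfin hbdd
end
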